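/- Writer comonad law L3' on the value component (unconditional): for all arrows f : Set ℕ × Zipper α → Set ℕ × β and g : Set ℕ × Zipper β → Set ℕ × γ and every (w, z) : Set ℕ × Zipper α, the zipper components agree: (extendW g (extendW f (w, z))).2 = (extendW (g ∘ extendW f) (w, z)).2. -/
import Mathlib


/-- A list zipper: a focused element with left context (stored reversed,
nearest neighbor first) and right context. -/
structure Zipper (α : Type*) where
  left : List α
  focus : α
  right : List α

namespace Zipper

variable {α β γ δ : Type*}

/-- Extract the focused element. -/
def extract (z : Zipper α) : α := z.focus

/-- Move the focus one step to the left (identity if the left context is empty). -/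
def moveLeft : Zipper α → Zipper α
  | ⟨a :: l, c, r⟩ => ⟨l, a, c :: r⟩
  | z => z

/-- Move the focus one step to the right (identity if the right context is empty). -/
def moveRight : Zipper α → Zipper α
  | ⟨l, c, b :: r⟩ => ⟨c :: l, b, r⟩
  | z => z

/-- Auxiliary: successive left shifts, structurally on the left context. -/
def leftsAux : List α → α → List α → List (Zipper α)
  | [], _, _ => []
  | a :: l, c, r => ⟨l, a, c :: r⟩ :: leftsAux l a (c :: r)

/-- The list [moveLeft z, moveLeft (moveLeft z), …] of successive left shifts. -/
def lefts (z : Zipper α) : List (Zipper α) := leftsAux z.left z.focus z.right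

/-- Auxiliary: successive right shifts, structurally on the right context. -/
def rightsAux : List α → α → List α → List (Zipper α)
  | _, _, [] => []
  | l, c, b :: r => ⟨c :: l, b, r⟩ :: rightsAux (c :: l) b r

/-- The list [moveRight z, moveRight (moveRight z), …] of successive right shifts. -/
def rights (z : Zipper α) : List (Zipper α) := rightsAux z.left z.focus z.right

/-- CoKleisli extension: apply the local rule `f` at every position. -/
def extend (f : Zipper α → β) (z : Zipper α) : Zipper β :=
  ⟨(lefts z).map f, f z, (rights z).map f⟩

/-- The underlying list of a zipper. -/
def toList (z : Zipper α) : List α := z.left.reverse ++ [z.focus] ++ z.right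

/-- The zipper refocused at position `i` (intended for `i < (toList z).length`). -/
def focusAt (z : Zipper α) (i : ℕ) : Zipper α :=
  ⟨((toList z).take i).reverse, (toList z).getD i z.focus, (toList z).drop (i + 1)⟩

end Zipper

open Zipper in
/-- Writer comonad counit: empty deletion set paired with the zipper focus. -/
def extractW {α : Type*} (p : Set ℕ × Zipper α) : Set ℕ × α :=
  (∅, Zipper.extract p.2)

open Zipper in
/-- Writer comonad extension: accumulate (by union) the deletion sets produced
by `f` at every position, and extend the value component over the zipper. -/
def extendW {α β : Type*} (f : Set ℕ × Zipper α → Set ℕ × β)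
    (p : Set ℕ × Zipper α) : Set ℕ × Zipper β :=
  (p.1 ∪ ⋃ i ∈ Finset.range (Zipper.toList p.2).length, (f (p.1, Zipper.focusAt p.2 i)).1,
   Zipper.extend (fun z' => (f (p.1, z')).2) p.2)


namespace Zipper

variable {α β γ : Type*}

lemma toList_of_mem_leftsAux : ∀ (l : List α) (c : α) (r : List α) (z' : Zipper α),
    z' ∈ leftsAux l c r → z'.toList = toList ⟨l, c, r⟩ := by
  intro l
  induction l with
  | nil => intro c r z' h; simp [leftsAux] at h
  | cons a l ih =>
    intro c r z' h
    rw [leftsAux] at h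
    rcases List.mem_cons.mp h with h | h
    · subst h; simp [toList]
    · rw [ih a (c :: r) z' h]; simp [toList]

lemma toList_of_mem_rightsAux : ∀ (r : List α) (l : List α) (c : α) (z' : Zipper α),
    z' ∈ rightsAux l c r → z'.toList = toList ⟨l, c, r⟩ := by
  intro r
  induction r with
  | nil => intro l c z' h; simp [rightsAux] at h
  | cons b r ih =>
    intro l c z' h
    rw [rightsAux] at h
    rcases List.mem_cons.mp h with h | h
    · subst h; simp [toList]
    · rw [ih (c :: l) b z' h]; simp [toList]

lemma extend_congr (h1 h2 : Zipper α → β) (z : Zipper α)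
    (H : ∀ z', toList z' = toList z → h1 z' = h2 z') : extend h1 z = extend h2 z := by
  unfold extend
  congr 1
  · exact List.map_congr_left fun z' hz' => H z' (toList_of_mem_leftsAux z.left z.focus z.right z' hz')
  · exact H z rfl
  · exact List.map_congr_left fun z' hz' => H z' (toList_of_mem_rightsAux z.right z.left z.focus z' hz')

lemma rightsAux_map_aux (f : Zipper α → β) :
    ∀ (r l : List α) (c : α),
      rightsAux (List.map f (leftsAux l c r)) (f ⟨l, c, r⟩) (List.map f (rightsAux l c r))
        = List.map (extend f) (rightsAux l c r) := by
  intro r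
  induction r with
  | nil => intro l c; simp [rightsAux]
  | cons b r ih =>
    intro l c
    exact List.cons_eq_cons.mpr ⟨rfl, ih (c :: l) b⟩

lemma leftsAux_map_aux (f : Zipper α → β) :
    ∀ (l : List α) (c : α) (r : List α),
      leftsAux (List.map f (leftsAux l c r)) (f ⟨l, c, r⟩) (List.map f (rightsAux l c r))
        = List.map (extend f) (leftsAux l c r) := by
  intro l
  induction l with
  | nil => intro c r; simp [leftsAux]
  | cons a l ih =>
    intro c r
    exact List.cons_eq_cons.mpr ⟨rfl, ih a (c :: r)⟩

lemma lefts_extend (f : Zipper α → β) (z : Zipper α) :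
    lefts (extend f z) = List.map (extend f) (lefts z) :=
  leftsAux_map_aux f z.left z.focus z.right

lemma rights_extend (f : Zipper α → β) (z : Zipper α) :
    rights (extend f z) = List.map (extend f) (rights z) :=
  rightsAux_map_aux f z.right z.left z.focus

lemma extend_extend (g : Zipper β → γ) (f : Zipper α → β) (z : Zipper α) :
    extend g (extend f z) = extend (g ∘ extend f) z := by
  show (⟨List.map g (lefts (extend f z)), g (extend f z), List.map g (rights (extend f z))⟩ :
      Zipper γ)
    = ⟨List.map (g ∘ extend f) (lefts z), (g ∘ extend f) z, List.map (g ∘ extend f) (rights z)⟩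
  rw [lefts_extend, rights_extend, List.map_map, List.map_map]
  rfl

lemma focusAt_congr (z1 z2 : Zipper α) (i : ℕ) (h : toList z1 = toList z2)
    (hi : i < (toList z1).length) : focusAt z1 i = focusAt z2 i := by
  unfold focusAt
  rw [List.getD_eq_getElem _ _ hi, List.getD_eq_getElem _ _ (h ▸ hi)]
  congr 1
  · rw [h]
  · exact List.getElem_of_eq h hi
  · rw [h]

end Zipper

/-- Writer comonad law L3' on the value component (unconditional):
the zipper components of both sides agree. -/
theorem writer_comonad_law3_value {α β γ : Type*}
    (f : Set ℕ × Zipper α → Set ℕ × β) (g : Set ℕ × Zipper β → Set ℕ × γ)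
    (w : Set ℕ) (z : Zipper α) :
    (extendW g (extendW f (w, z))).2 = (extendW (g ∘ extendW f) (w, z)).2 := by
  have key : ∀ z' : Zipper α, Zipper.toList z' = Zipper.toList z →
      (w ∪ ⋃ i ∈ Finset.range (Zipper.toList z').length, (f (w, Zipper.focusAt z' i)).1)
        = (w ∪ ⋃ i ∈ Finset.range (Zipper.toList z).length, (f (w, Zipper.focusAt z i)).1) := by
    intro z' h
    congr 1
    rw [h]
    refine Set.iUnion₂_congr fun i hi => ?_
    rw [Zipper.focusAt_congr z' z i h (by rw [h]; exact Finset.mem_range.mp hi)]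
  show Zipper.extend _ (Zipper.extend _ z) = Zipper.extend _ z
  rw [Zipper.extend_extend]
  apply Zipper.extend_congr
  intro z' hz'
  show (g (_, Zipper.extend _ z')).2 = (g (extendW f (w, z'))).2
  unfold extendW
  rw [key z' hz']
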